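/- Assume F satisfies the open set condition and A has nonempty topological interior. Then the topological boundary (frontier) of A in ℝ^d is covered by the boundary sets: frontier(A) ⊆ ⋃ { A ∩ f_w^{-1}(f_v(A)) : v, w words of equal length k ≥ 1 with v_1 ≠ w_1 }. -/

import Mathlib

open Set

noncomputable section

/-- Points of Euclidean space `ℝ^d`. -/
abbrev Pt (d : ℕ) := EuclideanSpace ℝ (Fin d)

/-- For a word `w = w₁…w_k`, the map `f_w = f_{w₁} ∘ ⋯ ∘ f_{w_k}`. -/
def fWord {d m : ℕ} (f : Fin m → Pt d → Pt d) (w : List (Fin m)) : Pt d → Pt d :=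
  w.foldr (fun j g => f j ∘ g) id

/-- The union of all boundary sets `A ∩ f_w⁻¹(f_v(A))`, over words `v, w` of equal
length `k ≥ 1` whose first letters differ. -/
def boundaryUnion {d m : ℕ} (f : Fin m → Pt d → Pt d) (A : Set (Pt d)) : Set (Pt d) :=
  {x | ∃ v w : List (Fin m), v ≠ [] ∧ v.length = w.length ∧ v.head? ≠ w.head? ∧
        x ∈ A ∩ fWord f w ⁻¹' (fWord f v '' A)}

/-- The dynamical boundary `B(A)`: the closure of the union of all boundary sets. -/
def dynBoundary {d m : ℕ} (f : Fin m → Pt d → Pt d) (A : Set (Pt d)) : Set (Pt d) :=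
  closure (boundaryUnion f A)

/-!
Suppose `x ∈ frontier A` lies in no boundary set. Stripping a common prefix shows that then
`f_u x ∉ f_v(A)` for any two distinct words `u, v` of the same length. As the maps contract, some
piece `f_u(A)` lies in `interior A`. The point `f_u x` lies in the open set
`interior A \ ⋃_{v ≠ u, |v| = |u|} f_v(A)`, which is contained in `f_u(A)` since `A` is the union
of its pieces of level `|u|`. As `x` is a limit of points `y ∉ A`, some `f_u y` lies in that open
set, hence in `f_u(A)`, and injectivity of `f_u` gives `y ∈ A`, a contradiction.
-/

open Function Topology
open scoped NNReal

section Words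

variable {d m : ℕ} {f : Fin m → Pt d → Pt d} {A : Set (Pt d)}

lemma fWord_cons (f : Fin m → Pt d → Pt d) (a : Fin m) (w : List (Fin m)) :
    fWord f (a :: w) = f a ∘ fWord f w :=
  rfl

lemma image_fWord_cons (f : Fin m → Pt d → Pt d) (a : Fin m) (w : List (Fin m))
    (s : Set (Pt d)) : fWord f (a :: w) '' s = f a '' (fWord f w '' s) := by
  rw [fWord_cons, image_comp]

lemma fWord_injective (hinj : ∀ j, Injective (f j)) (w : List (Fin m)) :
    Injective (fWord f w) := by
  induction w with
  | nil => exact injective_id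
  | cons a w ih => exact (hinj a).comp ih

lemma lipschitzWith_fWord {K : ℝ≥0} (hf : ∀ j, LipschitzWith K (f j)) (w : List (Fin m)) :
    LipschitzWith (K ^ w.length) (fWord f w) := by
  induction w with
  | nil => simpa [fWord] using LipschitzWith.id
  | cons a w ih => rw [fWord_cons, List.length_cons, pow_succ']; exact (hf a).comp ih

lemma continuous_fWord (hcont : ∀ j, Continuous (f j)) (w : List (Fin m)) :
    Continuous (fWord f w) := by
  induction w with
  | nil => exact continuous_id
  | cons a w ih => exact (hcont a).comp ih

lemma exists_length_eq_mem_image_fWord (hA : A = ⋃ j, f j '' A) (k : ℕ) {y : Pt d}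
    (hy : y ∈ A) : ∃ w : List (Fin m), w.length = k ∧ y ∈ fWord f w '' A := by
  induction k generalizing y with
  | zero => exact ⟨[], rfl, y, hy, rfl⟩
  | succ k ih =>
    rw [hA] at hy
    obtain ⟨j, z, hz, rfl⟩ := mem_iUnion.mp hy
    obtain ⟨w, hw, hzw⟩ := ih hz
    exact ⟨j :: w, by simp [hw], by rw [image_fWord_cons]; exact mem_image_of_mem _ hzw⟩

lemma exists_image_fWord_subset_of_mem_nhds {K : ℝ≥0} (hK : K < 1)
    (hf : ∀ j, LipschitzWith K (f j)) (hA : A = ⋃ j, f j '' A)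
    (hAb : Bornology.IsBounded A) {a : Pt d} (ha : a ∈ A) {s : Set (Pt d)} (hs : s ∈ 𝓝 a) :
    ∃ u : List (Fin m), fWord f u '' A ⊆ s := by
  obtain ⟨ρ, hρ, hball⟩ := Metric.mem_nhds_iff.mp hs
  have hsmall : Filter.Tendsto (fun k : ℕ => (K : ℝ) ^ k * Metric.diam A) .atTop (𝓝 0) := by
    simpa using (tendsto_pow_atTop_nhds_zero_of_lt_one K.coe_nonneg hK).mul_const
      (Metric.diam A)
  obtain ⟨k, hk⟩ := (hsmall.eventually (gt_mem_nhds hρ)).exists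
  obtain ⟨u, rfl, z₀, hz₀, rfl⟩ := exists_length_eq_mem_image_fWord hA k ha
  refine ⟨u, ?_⟩
  rintro _ ⟨z, hz, rfl⟩
  apply hball
  calc dist (fWord f u z) (fWord f u z₀) ≤ (K : ℝ) ^ u.length * dist z z₀ := by
        simpa using (lipschitzWith_fWord hf u).dist_le_mul z z₀
    _ ≤ (K : ℝ) ^ u.length * Metric.diam A := by
        gcongr
        exact Metric.dist_le_diam_of_mem hAb hz hz₀
    _ < ρ := hk

lemma fWord_apply_notMem_image_of_notMem_boundaryUnion (hinj : ∀ j, Injective (f j))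
    {x : Pt d} (hxA : x ∈ A) (hx : x ∉ boundaryUnion f A) :
    ∀ {v w : List (Fin m)}, v.length = w.length → v ≠ w → fWord f w x ∉ fWord f v '' A
  | [], [], _, hne => absurd rfl hne
  | a :: v, b :: w, hlen, hne => by
    by_cases hab : a = b
    · subst hab
      rw [image_fWord_cons, fWord_cons, comp_apply, (hinj a).mem_set_image]
      exact fWord_apply_notMem_image_of_notMem_boundaryUnion hinj hxA hx
        (by simpa using hlen) (by rintro rfl; exact hne rfl)
    · exact fun hmem => hx ⟨a :: v, b :: w, List.cons_ne_nil a v, hlen, by simp [hab], hxA, hmem⟩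

def otherPieces (f : Fin m → Pt d → Pt d) (A : Set (Pt d)) (u : List (Fin m)) : Set (Pt d) :=
  ⋃ v ∈ {v : List (Fin m) | v.length = u.length ∧ v ≠ u}, fWord f v '' A

lemma isClosed_otherPieces (hcont : ∀ j, Continuous (f j)) (hAc : IsCompact A)
    (u : List (Fin m)) : IsClosed (otherPieces f A u) := by
  refine Finite.isClosed_biUnion ?_ fun v _ => (hAc.image (continuous_fWord hcont v)).isClosed
  exact (List.finite_length_eq (Fin m) u.length).subset fun v hv => hv.1

lemma diff_otherPieces_subset (hA : A = ⋃ j, f j '' A) (u : List (Fin m)) :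
    A \ otherPieces f A u ⊆ fWord f u '' A := by
  rintro y ⟨hyA, hy⟩
  obtain ⟨v, hv, hyv⟩ := exists_length_eq_mem_image_fWord hA u.length hyA
  by_cases hvu : v = u
  · exact hvu ▸ hyv
  · exact absurd (mem_iUnion₂.2 ⟨v, ⟨hv, hvu⟩, hyv⟩) hy

lemma fWord_apply_notMem_otherPieces (hinj : ∀ j, Injective (f j)) {x : Pt d} (hxA : x ∈ A)
    (hx : x ∉ boundaryUnion f A) (u : List (Fin m)) : fWord f u x ∉ otherPieces f A u := by
  simp only [otherPieces, mem_iUnion]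
  rintro ⟨v, ⟨hv, hvu⟩, hmem⟩
  exact fWord_apply_notMem_image_of_notMem_boundaryUnion hinj hxA hx hv hvu hmem

end Words

lemma exists_lipschitzWith_lt_one {ι X Y : Type*} [Fintype ι] [PseudoMetricSpace X]
    [PseudoMetricSpace Y] {f : ι → X → Y} {r : ι → ℝ} (hr1 : ∀ j, r j < 1)
    (hf : ∀ j x y, dist (f j x) (f j y) ≤ r j * dist x y) :
    ∃ K : ℝ≥0, K < 1 ∧ ∀ j, LipschitzWith K (f j) := by
  refine ⟨Finset.univ.sup fun j => (r j).toNNReal,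
    (Finset.sup_lt_iff zero_lt_one).2 fun j _ => Real.toNNReal_lt_one.2 (hr1 j),
    fun j => LipschitzWith.of_dist_le_mul fun x y => (hf j x y).trans ?_⟩
  gcongr
  exact (Real.le_coe_toNNReal (r j)).trans
    (NNReal.coe_le_coe.2 (Finset.le_sup (f := fun j => (r j).toNNReal) (Finset.mem_univ j)))

theorem frontier_subset_boundaryUnion_general
    {d m : ℕ} (f : Fin m → Pt d → Pt d) (r : Fin m → ℝ)
    (hr0 : ∀ j, 0 < r j) (hr1 : ∀ j, r j < 1)
    (hf : ∀ j x y, dist (f j x) (f j y) = r j * dist x y)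
    (A : Set (Pt d)) (hAc : IsCompact A)
    (hA : A = ⋃ j, f j '' A)
    (hint : (interior A).Nonempty) :
    frontier A ⊆ boundaryUnion f A := by
  have hinj : ∀ j, Injective (f j) := fun j x y hxy => dist_eq_zero.mp <|
    (mul_eq_zero.mp ((hf j x y).symm.trans (dist_eq_zero.mpr hxy))).resolve_left (hr0 j).ne'
  obtain ⟨K, hK, hK_lip⟩ := exists_lipschitzWith_lt_one hr1 fun j x y => (hf j x y).le
  have hcont : ∀ j, Continuous (f j) := fun j => (hK_lip j).continuous
  obtain ⟨a, ha⟩ := hint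
  obtain ⟨u, hu⟩ := exists_image_fWord_subset_of_mem_nhds hK hK_lip hA hAc.isBounded
    (interior_subset ha) (isOpen_interior.mem_nhds ha)
  intro x hx
  by_contra hxB
  have hxA : x ∈ A := hAc.isClosed.frontier_subset hx
  have hxu : fWord f u x ∈ interior A \ otherPieces f A u :=
    ⟨hu (mem_image_of_mem _ hxA), fWord_apply_notMem_otherPieces hinj hxA hxB u⟩
  have hopen : IsOpen (interior A \ otherPieces f A u) :=
    isOpen_interior.sdiff (isClosed_otherPieces hcont hAc u)
  have hxu_cl : fWord f u x ∈ closure (fWord f u '' Aᶜ) :=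
    image_closure_subset_closure_image (continuous_fWord hcont u)
      (mem_image_of_mem _ (frontier_subset_closure (by rwa [frontier_compl])))
  obtain ⟨_, hy, y, hyA, rfl⟩ := mem_closure_iff.mp hxu_cl _ hopen hxu
  exact hyA <| (fWord_injective hinj u).mem_set_image.mp <|
    diff_otherPieces_subset hA u ⟨interior_subset hy.1, hy.2⟩

/-- Under the OSC, if `A` has nonempty topological interior, then the topological
frontier of `A` is covered by the boundary sets. -/
theorem frontier_subset_boundaryUnion
    {d m : ℕ} (hm : 2 ≤ m) (f : Fin m → Pt d → Pt d) (r : Fin m → ℝ)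
    (hr0 : ∀ j, 0 < r j) (hr1 : ∀ j, r j < 1)
    (hf : ∀ j x y, dist (f j x) (f j y) = r j * dist x y)
    (A : Set (Pt d)) (hAne : A.Nonempty) (hAc : IsCompact A)
    (hA : A = ⋃ j, f j '' A)
    (hOSC : ∃ U : Set (Pt d), U.Nonempty ∧ IsOpen U ∧ (∀ j, f j '' U ⊆ U) ∧
      ∀ i j, i ≠ j → Disjoint (f i '' U) (f j '' U))
    (hint : (interior A).Nonempty) :
    frontier A ⊆ boundaryUnion f A :=
  frontier_subset_boundaryUnion_general f r hr0 hr1 hf A hAc hA hint
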